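/- arXiv:2312.12355 — 7 statements merged into one kernel-verified Lean document; each statement's English description precedes it below -/
import Mathlib

section
/- Let V be a finite-dimensional real inner product space, M a symmetric positive definite linear operator on V, and f : V → ℝ differentiable with μ·(1/2)‖u−v‖²_M ≤ D_f(u,v) ≤ L·(1/2)‖u−v‖²_M for all u,v, where D_f(u,v) = f(u) − f(v) − ⟨∇f(v), u−v⟩ and 0 < μ ≤ L. Define e_M(ξ) = ξ − M ∇f*(ξ) where f* is the convex conjugate. If μ > 1/2, then for all ξ₁, ξ₂: ‖e_M(ξ₁) − e_M(ξ₂)‖²_{M⁻¹} ≤ (1 − (2μ−1)/(μL)) ‖ξ₁ − ξ₂‖²_{M⁻¹}. -/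
/-!
Strong convexity makes `∇f` surjective (a coercive function attains its minimum, where its
gradient vanishes), and a right inverse `U` of it is Lipschitz by strong monotonicity.
Each `U η` is a subgradient of `f*` at `η`, so `∇f* = U`, and with `g = ξ₁ - ξ₂`,
`d = U ξ₁ - U ξ₂` we get
`‖e_M ξ₁ - e_M ξ₂‖²_{M⁻¹} = ‖g - M d‖²_{M⁻¹} = ‖g‖²_{M⁻¹} - 2⟪g, d⟫ + ‖d‖²_M`.
Strong monotonicity `μ ‖d‖²_M ≤ ⟪g, d⟫` and cocoercivity `‖g‖²_{M⁻¹} ≤ L ⟪g, d⟫` of `∇f`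
bound this by `(1 - (2μ - 1)/(μL)) ‖g‖²_{M⁻¹}`; the gain is positive exactly when `μ > 1/2`.
-/

open RealInnerProductSpace Filter Topology

theorem tendsto_cocompact_atTop_of_quadratic_le {E : Type*} [NormedAddCommGroup E] [ProperSpace E]
    {φ : E → ℝ} {a b k : ℝ} (ha : 0 < a) (h : ∀ v, a * ‖v‖ ^ 2 - b * ‖v‖ + k ≤ φ v) :
    Tendsto φ (cocompact E) atTop := by
  have hq : Tendsto (fun t : ℝ => t * (a * t - b) + k) atTop atTop :=
    tendsto_atTop_add_const_right _ _ <| tendsto_id.atTop_mul_atTop₀ <|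
      tendsto_atTop_add_const_right _ _ (tendsto_id.const_mul_atTop ha)
  refine tendsto_atTop_mono (fun v => le_of_eq_of_le ?_ (h v))
    (hq.comp tendsto_norm_cocompact_atTop)
  change ‖v‖ * (a * ‖v‖ - b) + k = _
  ring

section

variable {E : Type*} [NormedAddCommGroup E] [InnerProductSpace ℝ E]

theorem exists_pos_mul_norm_sq_le_inner_map_self [FiniteDimensional ℝ E] (M : E →ₗ[ℝ] E)
    (hM : ∀ x, x ≠ 0 → 0 < ⟪M x, x⟫) : ∃ c > 0, ∀ x, c * ‖x‖ ^ 2 ≤ ⟪M x, x⟫ := by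
  rcases subsingleton_or_nontrivial E with hE | hE
  · exact ⟨1, one_pos, fun x => by simp [Subsingleton.elim x 0]⟩
  have hMc : Continuous fun x => ⟪M x, x⟫ := M.continuous_of_finiteDimensional.inner continuous_id
  obtain ⟨x₀, hx₀, hmin⟩ := (isCompact_sphere (0 : E) 1).exists_isMinOn
    (NormedSpace.sphere_nonempty.mpr zero_le_one) hMc.continuousOn
  refine ⟨⟪M x₀, x₀⟫, hM x₀ (ne_zero_of_mem_unit_sphere ⟨x₀, hx₀⟩), fun x => ?_⟩
  rcases eq_or_ne x 0 with rfl | hx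
  · simp
  have hxn : 0 < ‖x‖ := norm_pos_iff.mpr hx
  have hunit : ‖x‖⁻¹ • x ∈ Metric.sphere (0 : E) 1 := by simp [norm_smul, hxn.ne']
  have hle : ⟪M x₀, x₀⟫ ≤ ⟪M (‖x‖⁻¹ • x), ‖x‖⁻¹ • x⟫ := hmin hunit
  rw [map_smul, real_inner_smul_left, real_inner_smul_right] at hle
  calc ⟪M x₀, x₀⟫ * ‖x‖ ^ 2 ≤ ‖x‖⁻¹ * (‖x‖⁻¹ * ⟪M x, x⟫) * ‖x‖ ^ 2 := by gcongr
    _ = ⟪M x, x⟫ := by field_simp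

theorem inner_inv_sub_map_self {M Minv : E →ₗ[ℝ] E} (hMsym : ∀ x y, ⟪M x, y⟫ = ⟪x, M y⟫)
    (hMinv : ∀ y, M (Minv y) = y) (g d : E) :
    ⟪Minv (g - M d), g - M d⟫ = ⟪Minv g, g⟫ - 2 * ⟪g, d⟫ + ⟪M d, d⟫ := by
  have hinv : ∀ x y, ⟪Minv x, M y⟫ = ⟪x, y⟫ := fun x y => by rw [← hMsym, hMinv]
  have hinv_symm : ⟪Minv (M d), g⟫ = ⟪g, d⟫ := by
    conv_lhs => rw [← hMinv g]
    rw [hinv, hMsym, hMinv, real_inner_comm]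
  simp only [map_sub, inner_sub_left, inner_sub_right, hinv, hinv_symm]
  ring

variable [CompleteSpace E]

noncomputable def bregman (f : E → ℝ) (u v : E) : ℝ := f u - f v - ⟪gradient f v, u - v⟫

/-- `⨆` of a family unbounded above is the junk value `0`; it is only evaluated where the
supremum is attained. -/
noncomputable def convexConjugate (f : E → ℝ) (ξ : E) : ℝ := ⨆ u, ⟪ξ, u⟫ - f u

variable {f : E → ℝ}

theorem mul_le_inner_gradient_sub_of_mul_le_bregman {Q : E → ℝ} (hQ : ∀ x, Q (-x) = Q x) {μ : ℝ}
    (h : ∀ u v, μ * (1 / 2 * Q (u - v)) ≤ bregman f u v) (u v : E) :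
    μ * Q (u - v) ≤ ⟪gradient f u - gradient f v, u - v⟫ := by
  have huv := h u v
  have hvu := h v u
  unfold bregman at huv hvu
  rw [← neg_sub u v, hQ, inner_neg_right] at hvu
  rw [inner_sub_left]
  linarith

theorem bregman_nonneg_of_mul_le {Q : E → ℝ} (hQ : ∀ x, 0 ≤ Q x) {μ : ℝ} (hμ : 0 ≤ μ)
    (h : ∀ u v, μ * (1 / 2 * Q (u - v)) ≤ bregman f u v) (u v : E) :
    0 ≤ bregman f u v :=
  (mul_nonneg hμ (mul_nonneg one_half_pos.le (hQ _))).trans (h u v)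

theorem inner_inv_gradient_sub_div_le_bregman {M Minv : E →ₗ[ℝ] E} (hMinv : ∀ y, M (Minv y) = y)
    {L : ℝ} (hL : 0 < L) (hconv : ∀ u v, 0 ≤ bregman f u v)
    (hup : ∀ u v, bregman f u v ≤ L * (1 / 2 * ⟪M (u - v), u - v⟫)) (p q : E) :
    1 / (2 * L) * ⟪Minv (gradient f p - gradient f q), gradient f p - gradient f q⟫ ≤
      bregman f p q := by
  set g := gradient f p - gradient f q
  -- test point: one `M⁻¹`-preconditioned gradient step of length `1/L` from `p`
  set w := p - L⁻¹ • Minv g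
  have h1 := hconv w q
  have h2 := hup w p
  have hwp : w - p = -(L⁻¹ • Minv g) := by simp [w]
  have hwq : w - q = (p - q) - L⁻¹ • Minv g := by simp only [w]; abel
  unfold bregman at h1 h2 ⊢
  rw [hwp, map_neg, map_smul, hMinv, inner_neg_neg, real_inner_smul_left,
    real_inner_smul_right, inner_neg_right, real_inner_smul_right, real_inner_comm (Minv g) g] at h2
  rw [hwq, inner_sub_right, real_inner_smul_right] at h1
  have hg : ⟪gradient f p, Minv g⟫ - ⟪gradient f q, Minv g⟫ = ⟪Minv g, g⟫ := by
    rw [← inner_sub_left, real_inner_comm]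
  have hL' : L * (1 / 2 * (L⁻¹ * (L⁻¹ * ⟪Minv g, g⟫))) = 1 / (2 * L) * ⟪Minv g, g⟫ := by
    field_simp
  have hL'' : L⁻¹ * ⟪gradient f p, Minv g⟫ - L⁻¹ * ⟪gradient f q, Minv g⟫ =
      2 * (1 / (2 * L) * ⟪Minv g, g⟫) := by
    rw [← mul_sub, hg]; field_simp
  linarith

theorem inner_inv_gradient_sub_le_mul_inner {M Minv : E →ₗ[ℝ] E} (hMinv : ∀ y, M (Minv y) = y)
    {L : ℝ} (hL : 0 < L) (hconv : ∀ u v, 0 ≤ bregman f u v)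
    (hup : ∀ u v, bregman f u v ≤ L * (1 / 2 * ⟪M (u - v), u - v⟫)) (p q : E) :
    ⟪Minv (gradient f p - gradient f q), gradient f p - gradient f q⟫ ≤
      L * ⟪gradient f p - gradient f q, p - q⟫ := by
  have hpq := inner_inv_gradient_sub_div_le_bregman hMinv hL hconv hup p q
  have hqp := inner_inv_gradient_sub_div_le_bregman hMinv hL hconv hup q p
  unfold bregman at hpq hqp
  rw [← neg_sub (gradient f p), map_neg, inner_neg_neg, ← neg_sub p q, inner_neg_right] at hqp
  have h := add_le_add hpq hqp
  rw [inner_sub_left]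
  field_simp at h
  linarith

theorem gradient_eq_of_forall_le {u ξ : E} (hf : DifferentiableAt ℝ f u)
    (hmin : ∀ v, f u - ⟪ξ, u⟫ ≤ f v - ⟪ξ, v⟫) : gradient f u = ξ := by
  have hderiv : HasFDerivAt (fun v => f v - ⟪ξ, v⟫)
      (InnerProductSpace.toDual ℝ E (gradient f u) - InnerProductSpace.toDual ℝ E ξ) u :=
    hf.hasGradientAt.hasFDerivAt.sub (innerSL ℝ ξ).hasFDerivAt
  have hlocal : IsLocalMin (fun v => f v - ⟪ξ, v⟫) u := Eventually.of_forall hmin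
  have hzero := hlocal.hasFDerivAt_eq_zero hderiv
  rwa [← map_sub, map_eq_zero_iff _ (InnerProductSpace.toDual ℝ E).injective, sub_eq_zero] at hzero

theorem surjective_gradient [FiniteDimensional ℝ E] (hf : Differentiable ℝ f) {m : ℝ} (hm : 0 < m)
    (h : ∀ u v, m * (1 / 2 * ‖u - v‖ ^ 2) ≤ bregman f u v) : Function.Surjective (gradient f) := by
  intro ξ
  have hlower : ∀ v, m / 2 * ‖v‖ ^ 2 - (‖gradient f 0‖ + ‖ξ‖) * ‖v‖ + f 0 ≤ f v - ⟪ξ, v⟫ := by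
    intro v
    have hv := h v 0
    have h0 := real_inner_le_norm ξ v
    have hξ := neg_le_of_abs_le (abs_real_inner_le_norm (gradient f 0) v)
    simp only [bregman, sub_zero] at hv
    nlinarith
  obtain ⟨u, hu⟩ := (hf.continuous.sub (continuous_const.inner continuous_id)).exists_forall_le
    (tendsto_cocompact_atTop_of_quadratic_le (by positivity) hlower)
  exact ⟨u, gradient_eq_of_forall_le (hf u) hu⟩

theorem inner_sub_le_of_gradient_eq (hconv : ∀ u v, 0 ≤ bregman f u v) {u ξ : E}
    (hu : gradient f u = ξ) (v : E) : ⟪ξ, v⟫ - f v ≤ ⟪ξ, u⟫ - f u := by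
  have := hconv v u
  rw [bregman, hu, inner_sub_right] at this
  linarith

theorem convexConjugate_eq_of_gradient_eq (hconv : ∀ u v, 0 ≤ bregman f u v) {u ξ : E}
    (hu : gradient f u = ξ) : convexConjugate f ξ = ⟪ξ, u⟫ - f u :=
  le_antisymm (ciSup_le (inner_sub_le_of_gradient_eq hconv hu))
    (le_ciSup ⟨_, Set.forall_mem_range.mpr (inner_sub_le_of_gradient_eq hconv hu)⟩ u)

theorem hasGradientAt_of_le_of_continuousAt {g : E → ℝ} {U : E → E}
    (hsub : ∀ ξ η, g η + ⟪U η, ξ - η⟫ ≤ g ξ) {η : E} (hU : ContinuousAt U η) :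
    HasGradientAt g (U η) η := by
  refine hasGradientAt_iff_isLittleO.mpr (Asymptotics.IsLittleO.of_bound fun ε hε => ?_)
  filter_upwards [Metric.tendsto_nhds.mp hU ε hε] with ξ hξ
  have hlow := hsub ξ η
  have hup := hsub η ξ
  have hcs := real_inner_le_norm (U ξ - U η) (ξ - η)
  rw [dist_eq_norm] at hξ
  rw [← neg_sub ξ η, inner_neg_right] at hup
  rw [inner_sub_left] at hcs
  rw [Real.norm_eq_abs, abs_of_nonneg (by linarith)]
  nlinarith [norm_nonneg (ξ - η)]

theorem lipschitzWith_of_rightInverse_gradient {U : E → E} (hU : ∀ ξ, gradient f (U ξ) = ξ)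
    {m : ℝ} (hm : 0 < m) (hmono : ∀ u v, m * ‖u - v‖ ^ 2 ≤ ⟪gradient f u - gradient f v, u - v⟫) :
    LipschitzWith (Real.toNNReal m⁻¹) U := by
  refine LipschitzWith.of_dist_le' fun ξ η => ?_
  have h := hmono (U ξ) (U η)
  rw [hU, hU] at h
  have hcs := real_inner_le_norm (ξ - η) (U ξ - U η)
  rw [dist_eq_norm, dist_eq_norm, ← div_eq_inv_mul, le_div_iff₀' hm]
  rcases (norm_nonneg (U ξ - U η)).eq_or_lt with h0 | hpos
  · rw [← h0, mul_zero]; exact norm_nonneg _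
  · nlinarith

theorem hasGradientAt_convexConjugate (hconv : ∀ u v, 0 ≤ bregman f u v) {U : E → E}
    (hU : ∀ ξ, gradient f (U ξ) = ξ) (hUc : Continuous U) (η : E) :
    HasGradientAt (convexConjugate f) (U η) η := by
  refine hasGradientAt_of_le_of_continuousAt (fun ξ η => ?_) hUc.continuousAt
  rw [convexConjugate_eq_of_gradient_eq hconv (hU ξ),
    convexConjugate_eq_of_gradient_eq hconv (hU η)]
  have := inner_sub_le_of_gradient_eq hconv (hU ξ) (U η)
  rw [inner_sub_right, real_inner_comm ξ (U η), real_inner_comm η (U η)]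
  linarith

theorem exists_rightInverse_gradient_eq_gradient_convexConjugate [FiniteDimensional ℝ E]
    (hf : Differentiable ℝ f) {m : ℝ} (hm : 0 < m)
    (h : ∀ u v, m * (1 / 2 * ‖u - v‖ ^ 2) ≤ bregman f u v) :
    ∃ U : E → E, (∀ ξ, gradient f (U ξ) = ξ) ∧ ∀ ξ, gradient (convexConjugate f) ξ = U ξ := by
  obtain ⟨U, hU⟩ := (surjective_gradient hf hm h).hasRightInverse
  have hconv := bregman_nonneg_of_mul_le (fun x => sq_nonneg ‖x‖) hm.le h
  have hUc := (lipschitzWith_of_rightInverse_gradient hU hm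
    (mul_le_inner_gradient_sub_of_mul_le_bregman (Q := fun x => ‖x‖ ^ 2)
      (fun x => by rw [norm_neg]) h)).continuous
  exact ⟨U, hU, fun ξ => (hasGradientAt_convexConjugate hconv hU hUc ξ).gradient⟩

end

theorem stmt_0_general {n : ℕ} (f : EuclideanSpace ℝ (Fin n) → ℝ) (hf : Differentiable ℝ f)
    (M Minv : EuclideanSpace ℝ (Fin n) →ₗ[ℝ] EuclideanSpace ℝ (Fin n))
    (hMsym : ∀ x y, ⟪M x, y⟫ = ⟪x, M y⟫)
    (hMpos : ∀ x, x ≠ 0 → 0 < ⟪M x, x⟫)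
    (hMinv' : M ∘ₗ Minv = LinearMap.id)
    (μ L : ℝ) (hμL : μ ≤ L)
    (hlow : ∀ u v, μ * (1/2 * ⟪M (u - v), u - v⟫) ≤ f u - f v - ⟪gradient f v, u - v⟫)
    (hup : ∀ u v, f u - f v - ⟪gradient f v, u - v⟫ ≤ L * (1/2 * ⟪M (u - v), u - v⟫))
    (hμhalf : 1/2 < μ)
    (fstar : EuclideanSpace ℝ (Fin n) → ℝ)
    (hfstar : ∀ ξ, fstar ξ = ⨆ u, (⟪ξ, u⟫ - f u))
    (eM : EuclideanSpace ℝ (Fin n) → EuclideanSpace ℝ (Fin n))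
    (heM : ∀ ξ, eM ξ = ξ - M (gradient fstar ξ)) :
    ∀ ξ₁ ξ₂,
      ⟪Minv (eM ξ₁ - eM ξ₂), eM ξ₁ - eM ξ₂⟫ ≤
        (1 - (2*μ - 1)/(μ*L)) * ⟪Minv (ξ₁ - ξ₂), ξ₁ - ξ₂⟫ := by
  obtain ⟨c, hc, hcM⟩ := exists_pos_mul_norm_sq_le_inner_map_self M hMpos
  have hμ : 0 < μ := by linarith
  have hL : 0 < L := hμ.trans_le hμL
  have hMMinv : ∀ y, M (Minv y) = y := LinearMap.congr_fun hMinv'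
  have hconv := bregman_nonneg_of_mul_le (Q := fun x => ⟪M x, x⟫)
    (fun x => (by positivity : 0 ≤ c * ‖x‖ ^ 2).trans (hcM x)) hμ.le hlow
  have hstrong : ∀ u v, μ * c * (1 / 2 * ‖u - v‖ ^ 2) ≤ bregman f u v := fun u v =>
    le_trans (by nlinarith [hcM (u - v)]) (hlow u v)
  obtain ⟨U, hU, hgrad⟩ :=
    exists_rightInverse_gradient_eq_gradient_convexConjugate hf (by positivity) hstrong
  obtain rfl : fstar = convexConjugate f := funext hfstar
  intro ξ₁ ξ₂
  have hA := mul_le_inner_gradient_sub_of_mul_le_bregman (Q := fun x => ⟪M x, x⟫)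
    (fun x => by rw [map_neg, inner_neg_neg]) hlow (U ξ₁) (U ξ₂)
  have hB := inner_inv_gradient_sub_le_mul_inner hMMinv hL hconv hup (U ξ₁) (U ξ₂)
  rw [hU, hU] at hA hB
  have heq : eM ξ₁ - eM ξ₂ = (ξ₁ - ξ₂) - M (U ξ₁ - U ξ₂) := by
    rw [heM, heM, hgrad, hgrad, map_sub]; abel
  have hgain : (2 * μ - 1) / (μ * L) * ⟪Minv (ξ₁ - ξ₂), ξ₁ - ξ₂⟫ ≤
      2 * ⟪ξ₁ - ξ₂, U ξ₁ - U ξ₂⟫ - ⟪M (U ξ₁ - U ξ₂), U ξ₁ - U ξ₂⟫ := by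
    rw [div_mul_eq_mul_div, div_le_iff₀ (by positivity)]
    nlinarith [mul_le_mul_of_nonneg_left hB (by linarith : 0 ≤ 2 * μ - 1),
      mul_le_mul_of_nonneg_left hA hL.le]
  rw [heq, inner_inv_sub_map_self hMsym hMMinv]
  linarith

/-- Lemma 6.1 (quantitative part): under strong convexity `μ > 1/2` in the `M`-metric,
the map `e_M(ξ) = ξ - M ∇f*(ξ)` is a contraction with factor `1 - (2μ-1)/(μL)`. -/
theorem stmt_0 {n : ℕ} (f : EuclideanSpace ℝ (Fin n) → ℝ) (hf : Differentiable ℝ f)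
    (M Minv : EuclideanSpace ℝ (Fin n) →ₗ[ℝ] EuclideanSpace ℝ (Fin n))
    (hMsym : ∀ x y, ⟪M x, y⟫ = ⟪x, M y⟫)
    (hMpos : ∀ x, x ≠ 0 → 0 < ⟪M x, x⟫)
    (hMinv : Minv ∘ₗ M = LinearMap.id) (hMinv' : M ∘ₗ Minv = LinearMap.id)
    (μ L : ℝ) (hμ0 : 0 < μ) (hμL : μ ≤ L)
    (hlow : ∀ u v, μ * (1/2 * ⟪M (u - v), u - v⟫) ≤ f u - f v - ⟪gradient f v, u - v⟫)
    (hup : ∀ u v, f u - f v - ⟪gradient f v, u - v⟫ ≤ L * (1/2 * ⟪M (u - v), u - v⟫))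
    (hμhalf : 1/2 < μ)
    (fstar : EuclideanSpace ℝ (Fin n) → ℝ)
    (hfstar : ∀ ξ, fstar ξ = ⨆ u, (⟪ξ, u⟫ - f u))
    (eM : EuclideanSpace ℝ (Fin n) → EuclideanSpace ℝ (Fin n))
    (heM : ∀ ξ, eM ξ = ξ - M (gradient fstar ξ)) :
    ∀ ξ₁ ξ₂,
      ⟪Minv (eM ξ₁ - eM ξ₂), eM ξ₁ - eM ξ₂⟫ ≤
        (1 - (2*μ - 1)/(μ*L)) * ⟪Minv (ξ₁ - ξ₂), ξ₁ - ξ₂⟫ :=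
  stmt_0_general f hf M Minv hMsym hMpos hMinv' μ L hμL hlow hup hμhalf fstar hfstar eM heM
end

section
/- Under the assumptions μ_{f,M} > 1/2 for f ∈ S_{μ,L} with respect to the SPD operator M, for all u₁, u₂ ∈ V: ‖∇f(u₁) − ∇f(u₂) − M(u₁ − u₂)‖²_{M⁻¹} ≤ L_e ‖∇f(u₁) − ∇f(u₂)‖²_{M⁻¹}, where L_e = 1 − (2μ−1)/(μL). -/
open RealInnerProductSpace

/-- Corollary 6.2: approximation inequality for the gradient. -/
theorem stmt_2 {n : ℕ} (f : EuclideanSpace ℝ (Fin n) → ℝ) (hf : Differentiable ℝ f)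
    (M Minv : EuclideanSpace ℝ (Fin n) →ₗ[ℝ] EuclideanSpace ℝ (Fin n))
    (hMsym : ∀ x y, ⟪M x, y⟫ = ⟪x, M y⟫)
    (hMpos : ∀ x, x ≠ 0 → 0 < ⟪M x, x⟫)
    (hMinv : Minv ∘ₗ M = LinearMap.id) (hMinv' : M ∘ₗ Minv = LinearMap.id)
    (μ L : ℝ) (hμL : μ ≤ L) (hμhalf : 1/2 < μ)
    (hlow : ∀ u v, μ * (1/2 * ⟪M (u - v), u - v⟫) ≤ f u - f v - ⟪gradient f v, u - v⟫)
    (hup : ∀ u v, f u - f v - ⟪gradient f v, u - v⟫ ≤ L * (1/2 * ⟪M (u - v), u - v⟫)) :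
    ∀ u₁ u₂,
      ⟪Minv (gradient f u₁ - gradient f u₂ - M (u₁ - u₂)),
          gradient f u₁ - gradient f u₂ - M (u₁ - u₂)⟫ ≤
        (1 - (2*μ - 1)/(μ*L)) *
          ⟪Minv (gradient f u₁ - gradient f u₂), gradient f u₁ - gradient f u₂⟫ := by
  have hμ0 : 0 < μ := by linarith
  have hL0 : 0 < L := by linarith
  have hMinvM : ∀ x, Minv (M x) = x := fun x => by
    have := DFunLike.congr_fun hMinv x; simpa using this
  have hMMinv : ∀ x, M (Minv x) = x := fun x => by
    have := DFunLike.congr_fun hMinv' x; simpa using this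
  have hM0 : ∀ x, (0:ℝ) ≤ ⟪M x, x⟫ := by
    intro x
    by_cases h : x = 0
    · simp [h]
    · exact (hMpos x h).le
  -- cocoercivity lemma
  have key : ∀ u v, (1/(2*L)) * ⟪Minv (gradient f v - gradient f u),
      gradient f v - gradient f u⟫ ≤ f v - f u - ⟪gradient f u, v - u⟫ := by
    intro u v
    set h := gradient f v - gradient f u with hh
    set w := v - (1/L) • Minv h with hw
    have h1 := hup w v
    have h2 := hlow w u
    have h3 : (0:ℝ) ≤ μ * (1/2 * ⟪M (w - u), w - u⟫) := by
      have := hM0 (w - u); positivity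
    have hwv : w - v = -((1/L) • Minv h) := by rw [hw]; abel
    -- scalar computations
    have e1 : ⟪gradient f v, w - v⟫ = -((1/L) * ⟪gradient f v, Minv h⟫) := by
      rw [hwv, inner_neg_right, real_inner_smul_right]
    have e2 : ⟪M (w - v), w - v⟫ = (1/L) * ((1/L) * ⟪Minv h, h⟫) := by
      rw [hwv, map_neg, inner_neg_neg, map_smul, real_inner_smul_left,
        real_inner_smul_right, hMMinv, real_inner_comm]
    have e3 : ⟪gradient f u, w - u⟫
        = ⟪gradient f u, v - u⟫ - (1/L) * ⟪gradient f u, Minv h⟫ := by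
      have : w - u = (v - u) - (1/L) • Minv h := by rw [hw]; abel
      rw [this, inner_sub_right, real_inner_smul_right]
    have e4 : ⟪gradient f v, Minv h⟫ - ⟪gradient f u, Minv h⟫ = ⟪Minv h, h⟫ := by
      rw [← inner_sub_left, ← hh, real_inner_comm]
    rw [e1, e2] at h1
    rw [e3] at h2
    have hQ : L * (1/2 * ((1/L) * ((1/L) * ⟪Minv h, h⟫))) = (1/(2*L)) * ⟪Minv h, h⟫ := by
      field_simp
    rw [hQ] at h1
    have e4' : (1/L) * ⟪gradient f v, Minv h⟫ - (1/L) * ⟪gradient f u, Minv h⟫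
        = (1/L) * ⟪Minv h, h⟫ := by rw [← mul_sub, e4]
    have hhalf : (1/(2*L)) * ⟪Minv h, h⟫ = (1/2) * ((1/L) * ⟪Minv h, h⟫) := by ring
    linarith [h1, h2, h3, e4', hhalf]
  intro u₁ u₂
  set g := gradient f u₁ - gradient f u₂ with hg
  set d := u₁ - u₂ with hd
  -- cocoercivity: (1/L) Q ≤ ⟪g, d⟫
  have k1 := key u₂ u₁
  have k2 := key u₁ u₂
  have hnegg : gradient f u₂ - gradient f u₁ = -g := by rw [hg]; abel
  have hnegd : u₂ - u₁ = -d := by rw [hd]; abel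
  rw [hnegg] at k2
  have k2' : (1/(2*L)) * ⟪Minv g, g⟫ ≤ f u₂ - f u₁ - ⟪gradient f u₁, u₂ - u₁⟫ := by
    simpa [inner_neg_neg] using k2
  rw [hnegd, inner_neg_right] at k2'
  have hco : (1/L) * ⟪Minv g, g⟫ ≤ ⟪g, d⟫ := by
    have hsum : (1/L) * ⟪Minv g, g⟫ ≤ ⟪gradient f u₁, d⟫ - ⟪gradient f u₂, d⟫ := by
      have := k1
      rw [← hg, ← hd] at this
      have htwo : (1/L) * ⟪Minv g, g⟫ = 2 * ((1/(2*L)) * ⟪Minv g, g⟫) := by ring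
      linarith [this, k2', htwo]
    rw [hg, inner_sub_left]
    linarith
  -- strong monotonicity: μ ⟪M d, d⟫ ≤ ⟪g, d⟫
  have hsm : μ * ⟪M d, d⟫ ≤ ⟪g, d⟫ := by
    have l1 := hlow u₁ u₂
    have l2 := hlow u₂ u₁
    rw [hnegd, map_neg, inner_neg_neg, inner_neg_right] at l2
    have : ⟪g, d⟫ = ⟪gradient f u₁, d⟫ - ⟪gradient f u₂, d⟫ := by
      rw [hg, inner_sub_left]
    nlinarith [l1, l2]
  -- expand the goal
  have hexp : ⟪Minv (g - M d), g - M d⟫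
      = ⟪Minv g, g⟫ - 2 * ⟪g, d⟫ + ⟪M d, d⟫ := by
    rw [map_sub, hMinvM]
    simp only [inner_sub_left, inner_sub_right]
    rw [← hMsym (Minv g) d, hMMinv, real_inner_comm d g, real_inner_comm d (M d)]
    ring
  rw [hexp]
  have hQL : ⟪Minv g, g⟫ ≤ L * ⟪g, d⟫ := by
    have heq : ⟪Minv g, g⟫ = L * ((1/L) * ⟪Minv g, g⟫) := by field_simp
    rw [heq]
    exact mul_le_mul_of_nonneg_left hco hL0.le
  set c := (2*μ - 1)/(μ*L) with hc
  have hc0 : 0 ≤ c := by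
    rw [hc]; exact div_nonneg (by linarith) (by positivity)
  have t1 : c * ⟪Minv g, g⟫ ≤ c * (L * ⟪g, d⟫) := mul_le_mul_of_nonneg_left hQL hc0
  have e : μ * (c * (L * ⟪g, d⟫)) = (2*μ - 1) * ⟪g, d⟫ := by
    rw [hc]; field_simp
  have h5 : μ * (c * ⟪Minv g, g⟫) ≤ (2*μ - 1) * ⟪g, d⟫ := by
    calc μ * (c * ⟪Minv g, g⟫) ≤ μ * (c * (L * ⟪g, d⟫)) :=
          mul_le_mul_of_nonneg_left t1 hμ0.le
      _ = (2*μ - 1) * ⟪g, d⟫ := e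
  have h6 : μ * (c * ⟪Minv g, g⟫ + ⟪M d, d⟫) ≤ μ * (2 * ⟪g, d⟫) := by
    rw [mul_add]; linarith [h5, hsm]
  have h7 : c * ⟪Minv g, g⟫ + ⟪M d, d⟫ ≤ 2 * ⟪g, d⟫ :=
    le_of_mul_le_mul_left (by linarith [h6]) hμ0
  linarith [h7]
end

section
/- For f strongly convex and smooth in the M-metric, i.e., μ·(1/2)‖u−v‖²_M ≤ D_f(u,v) ≤ L·(1/2)‖u−v‖²_M, the Bregman divergence satisfies the gradient-norm bounds: (1/(2L))‖∇f(u) − ∇f(v)‖²_{M⁻¹} ≤ D_f(u,v) ≤ (1/(2μ))‖∇f(u) − ∇f(v)‖²_{M⁻¹} for all u, v ∈ V. -/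
open RealInnerProductSpace

/-- Gradient-norm bounds (6.1) on the Bregman divergence. -/
theorem stmt_3 {n : ℕ} (f : EuclideanSpace ℝ (Fin n) → ℝ) (hf : Differentiable ℝ f)
    (M Minv : EuclideanSpace ℝ (Fin n) →ₗ[ℝ] EuclideanSpace ℝ (Fin n))
    (hMsym : ∀ x y, ⟪M x, y⟫ = ⟪x, M y⟫)
    (hMpos : ∀ x, x ≠ 0 → 0 < ⟪M x, x⟫)
    (hMinv : Minv ∘ₗ M = LinearMap.id) (hMinv' : M ∘ₗ Minv = LinearMap.id)
    (μ L : ℝ) (hμ0 : 0 < μ) (hμL : μ ≤ L)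
    (hlow : ∀ u v, μ * (1/2 * ⟪M (u - v), u - v⟫) ≤ f u - f v - ⟪gradient f v, u - v⟫)
    (hup : ∀ u v, f u - f v - ⟪gradient f v, u - v⟫ ≤ L * (1/2 * ⟪M (u - v), u - v⟫)) :
    ∀ u v,
      1/(2*L) * ⟪Minv (gradient f u - gradient f v), gradient f u - gradient f v⟫ ≤
          f u - f v - ⟪gradient f v, u - v⟫ ∧
        f u - f v - ⟪gradient f v, u - v⟫ ≤
          1/(2*μ) * ⟪Minv (gradient f u - gradient f v), gradient f u - gradient f v⟫ := by
  have hM0 : ∀ x : EuclideanSpace ℝ (Fin n), 0 ≤ ⟪M x, x⟫ := by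
    intro x
    rcases eq_or_ne x 0 with h | h
    · simp [h]
    · exact (hMpos x h).le
  have hMM : ∀ x, M (Minv x) = x := by
    intro x
    have := LinearMap.ext_iff.mp hMinv' x
    simpa using this
  have hL0 : 0 < L := lt_of_lt_of_le hμ0 hμL
  intro u v
  set gu := gradient f u with hgu
  set gv := gradient f v with hgv
  set p := Minv (gu - gv) with hp
  have hMp : M p = gu - gv := hMM _
  set s := ⟪Minv (gu - gv), gu - gv⟫ with hs
  have hsp : ⟪gu - gv, p⟫ = s := real_inner_comm _ _
  have hs0 : 0 ≤ s := by
    have h := hM0 p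
    rwa [hMp, hsp] at h
  constructor
  · -- lower bound
    set w := u - (1/L) • p with hw
    have h1 := hup w u
    have h2 := hlow w v
    have h3 : 0 ≤ μ * (1/2 * ⟪M (w - v), w - v⟫) :=
      mul_nonneg hμ0.le (mul_nonneg (by norm_num) (hM0 _))
    have hwu : w - u = (-(1/L)) • p := by rw [hw]; module
    have e1 : ⟪M (w - u), w - u⟫ = (1/L)^2 * s := by
      rw [hwu, map_smul, real_inner_smul_left, real_inner_smul_right, hMp, hsp]
      try ring
    have e2 : ⟪gu, w - u⟫ = -(1/L) * ⟪gu, p⟫ := by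
      rw [hwu, real_inner_smul_right]
      try ring
    have hwv : w - v = (u - v) - (1/L) • p := by rw [hw]; module
    have e3 : ⟪gv, w - v⟫ = ⟪gv, u - v⟫ - 1/L * ⟪gv, p⟫ := by
      rw [hwv, inner_sub_right, real_inner_smul_right]
    have e4 : ⟪gu, p⟫ - ⟪gv, p⟫ = s := by
      rw [← hsp, inner_sub_left]
    rw [e1, e2] at h1
    rw [e3] at h2
    have key : L * (1/2 * ((1/L)^2 * s)) = 1/(2*L) * s := by
      field_simp
    have key2 : 1/L * ⟪gu, p⟫ - 1/L * ⟪gv, p⟫ = 2 * (1/(2*L) * s) := by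
      linear_combination (1/L) * e4
    rw [key] at h1
    linarith
  · -- upper bound
    have h5 := hlow v u
    have e5 : ⟪M (v - u), v - u⟫ = ⟪M (u - v), u - v⟫ := by
      have : v - u = -(u - v) := by module
      rw [this, map_neg, inner_neg_neg]
    have e6 : ⟪gu, v - u⟫ = -⟪gu, u - v⟫ := by
      have : v - u = -(u - v) := by module
      rw [this, inner_neg_right]
    rw [e5, e6] at h5
    set d := u - v with hd
    have h6 := hM0 (d - (1/μ) • p)
    have c3 : ⟪M d, p⟫ = ⟪gu, d⟫ - ⟪gv, d⟫ := by
      rw [hMsym d p, hMp, real_inner_comm, inner_sub_left]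
    have c4 : ⟪gu - gv, p⟫ = s := hsp
    have c5 : ⟪gu - gv, d⟫ = ⟪gu, d⟫ - ⟪gv, d⟫ := inner_sub_left _ _ _
    have e7 : ⟪M (d - (1/μ) • p), d - (1/μ) • p⟫ =
        ⟪M d, d⟫ - 2/μ * (⟪gu, d⟫ - ⟪gv, d⟫) + (1/μ)^2 * s := by
      simp only [map_sub, map_smul, hMp, inner_sub_left, inner_sub_right,
        real_inner_smul_left, real_inner_smul_right, c3, c4, c5]
      have hμne : μ ≠ 0 := ne_of_gt hμ0
      field_simp
      ring
    rw [e7] at h6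
    have key : 2/μ * (⟪gu, d⟫ - ⟪gv, d⟫) ≤ ⟪M d, d⟫ + (1/μ)^2 * s := by linarith
    have key2 : ⟪gu, d⟫ - ⟪gv, d⟫ ≤ μ/2 * ⟪M d, d⟫ + 1/(2*μ) * s := by
      have h := mul_le_mul_of_nonneg_left key (le_of_lt (by positivity : (0:ℝ) < μ/2))
      have hμne : μ ≠ 0 := ne_of_gt hμ0
      have l1 : μ/2 * (2/μ * (⟪gu, d⟫ - ⟪gv, d⟫)) = ⟪gu, d⟫ - ⟪gv, d⟫ := by
        field_simp
        try ring
      have l2 : μ/2 * (⟪M d, d⟫ + (1/μ)^2 * s) = μ/2 * ⟪M d, d⟫ + 1/(2*μ) * s := by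
        field_simp
      rw [l1, l2] at h
      exact h
    linarith
end

section
/- Let {I*_k}, {I_k}, {S_k}, {S̃_k} be sequences of SPD operators on a finite-dimensional space satisfying the coupled updates I*_{k+1} = ω_k I*_k + (1−ω_k) S_k and I_{k+1} = ω_k I_k + (1−ω_k) S̃_k with weights ω_k ∈ (0,1). Suppose there exists δ ∈ (0,1) such that for all k: (1−δ) I*_k ⪯ I_k ⪯ (1+δ) I*_k and 2δ (ω_k/(1−ω_k)) I*_k ⪯ (1/2) S_k. Then for all k: (1/2 − δ) S_k ⪯ S̃_k ⪯ (3/2 + δ) S_k. -/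
open RealInnerProductSpace

/-- Proposition 3.3: spectral equivalence of the inexact Schur approximations. -/
theorem stmt_6 {n : ℕ}
    (Istar I S St : ℕ → (EuclideanSpace ℝ (Fin n) →ₗ[ℝ] EuclideanSpace ℝ (Fin n)))
    (hsym : ∀ k, (∀ x y, ⟪Istar k x, y⟫ = ⟪x, Istar k y⟫) ∧
        (∀ x y, ⟪I k x, y⟫ = ⟪x, I k y⟫) ∧
        (∀ x y, ⟪S k x, y⟫ = ⟪x, S k y⟫) ∧ (∀ x y, ⟪St k x, y⟫ = ⟪x, St k y⟫))
    (hpos : ∀ k, (∀ x, x ≠ 0 → 0 < ⟪Istar k x, x⟫) ∧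
        (∀ x, x ≠ 0 → 0 < ⟪I k x, x⟫) ∧
        (∀ x, x ≠ 0 → 0 < ⟪S k x, x⟫) ∧ (∀ x, x ≠ 0 → 0 < ⟪St k x, x⟫))
    (ω : ℕ → ℝ) (hω : ∀ k, ω k ∈ Set.Ioo (0:ℝ) 1)
    (hupd_star : ∀ k, Istar (k+1) = ω k • Istar k + (1 - ω k) • S k)
    (hupd : ∀ k, I (k+1) = ω k • I k + (1 - ω k) • St k)
    (δ : ℝ) (hδ : δ ∈ Set.Ioo (0:ℝ) 1)
    (hclose : ∀ k x, (1 - δ) * ⟪Istar k x, x⟫ ≤ ⟪I k x, x⟫ ∧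
        ⟪I k x, x⟫ ≤ (1 + δ) * ⟪Istar k x, x⟫)
    (hsmall : ∀ k x, 2 * δ * (ω k / (1 - ω k)) * ⟪Istar k x, x⟫ ≤ 1/2 * ⟪S k x, x⟫) :
    ∀ k x, (1/2 - δ) * ⟪S k x, x⟫ ≤ ⟪St k x, x⟫ ∧
      ⟪St k x, x⟫ ≤ (3/2 + δ) * ⟪S k x, x⟫ := by
  intro k x
  obtain ⟨hω0, hω1⟩ := hω k
  obtain ⟨hδ0, hδ1⟩ := hδ
  have h1ω : (0:ℝ) < 1 - ω k := by linarith
  have eI : ⟪I (k+1) x, x⟫ = ω k * ⟪I k x, x⟫ + (1 - ω k) * ⟪St k x, x⟫ := by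
    rw [hupd k]; simp [inner_add_left, real_inner_smul_left, Finset.mul_sum, mul_assoc]
  have eIs : ⟪Istar (k+1) x, x⟫ = ω k * ⟪Istar k x, x⟫ + (1 - ω k) * ⟪S k x, x⟫ := by
    rw [hupd_star k]; simp [inner_add_left, real_inner_smul_left, Finset.mul_sum, mul_assoc]
  have hc := hclose k x
  have hc' := hclose (k+1) x
  rw [eI, eIs] at hc'
  have hs := hsmall k x
  have hs' : 2 * δ * ω k * ⟪Istar k x, x⟫ ≤ (1 - ω k) * (1/2 * ⟪S k x, x⟫) := by
    have h := mul_le_mul_of_nonneg_left hs h1ω.le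
    have hne : (1 - ω k) ≠ 0 := ne_of_gt h1ω
    calc 2 * δ * ω k * ⟪Istar k x, x⟫
        = (1 - ω k) * (2 * δ * (ω k / (1 - ω k)) * ⟪Istar k x, x⟫) := by
          field_simp
      _ ≤ (1 - ω k) * (1/2 * ⟪S k x, x⟫) := h
  constructor
  · have key : (1 - ω k) * ((1/2 - δ) * ⟪S k x, x⟫) ≤ (1 - ω k) * ⟪St k x, x⟫ := by
      nlinarith [mul_le_mul_of_nonneg_left hc.2 hω0.le]
    exact le_of_mul_le_mul_left key h1ω
  · have key : (1 - ω k) * ⟪St k x, x⟫ ≤ (1 - ω k) * ((3/2 + δ) * ⟪S k x, x⟫) := by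
      nlinarith [mul_le_mul_of_nonneg_left hc.1 hω0.le]
    exact le_of_mul_le_mul_left key h1ω
end

section
/- If the spectral radius of I − D⁻¹A satisfies ρ(I − D⁻¹A) ≤ δ/(1+δ) for SPD operators A, D and δ ∈ (0,1), then (1−δ)A ⪯ D ⪯ (1+δ)A in the sense of quadratic forms. -/
open RealInnerProductSpace

section Aux

variable {n : ℕ}

/-- diagonal operator in an orthonormal basis -/
noncomputable def diagConj (b : OrthonormalBasis (Fin n) ℝ (EuclideanSpace ℝ (Fin n)))
    (g : Fin n → ℝ) : Module.End ℝ (EuclideanSpace ℝ (Fin n)) :=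
  b.toBasis.constr ℝ (fun i => g i • b i)

lemma diagConj_apply_basis (b : OrthonormalBasis (Fin n) ℝ (EuclideanSpace ℝ (Fin n)))
    (g : Fin n → ℝ) (i : Fin n) : diagConj b g (b i) = g i • b i := by
  have := b.toBasis.constr_basis ℝ (fun i => g i • b i) i
  simpa [diagConj] using this

lemma diagConj_mul (b : OrthonormalBasis (Fin n) ℝ (EuclideanSpace ℝ (Fin n)))
    (g h : Fin n → ℝ) : diagConj b g * diagConj b h = diagConj b (fun i => g i * h i) := by
  apply b.toBasis.ext
  intro i
  simp only [Module.End.mul_apply, OrthonormalBasis.coe_toBasis, diagConj_apply_basis,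
    map_smul, smul_smul]
  rw [mul_comm]

lemma diagConj_one (b : OrthonormalBasis (Fin n) ℝ (EuclideanSpace ℝ (Fin n))) :
    diagConj b (fun _ => 1) = 1 := by
  apply b.toBasis.ext
  intro i
  simp [diagConj_apply_basis]

lemma inner_diagConj (b : OrthonormalBasis (Fin n) ℝ (EuclideanSpace ℝ (Fin n)))
    (g : Fin n → ℝ) (x y : EuclideanSpace ℝ (Fin n)) :
    ⟪diagConj b g x, y⟫ = ∑ i, g i * (b.repr x i * b.repr y i) := by
  conv_lhs => rw [← b.sum_repr x, map_sum, sum_inner]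
  simp only [map_smul, diagConj_apply_basis, real_inner_smul_left, smul_eq_mul,
    ← b.repr_apply_apply]
  exact Finset.sum_congr rfl fun i _ => by ring

lemma diagConj_symm (b : OrthonormalBasis (Fin n) ℝ (EuclideanSpace ℝ (Fin n)))
    (g : Fin n → ℝ) (x y : EuclideanSpace ℝ (Fin n)) :
    ⟪diagConj b g x, y⟫ = ⟪x, diagConj b g y⟫ := by
  rw [inner_diagConj]
  conv_rhs => rw [real_inner_comm, inner_diagConj]
  exact Finset.sum_congr rfl fun i _ => by ring

lemma quad_bound (T : Module.End ℝ (EuclideanSpace ℝ (Fin n)))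
    (hT : ∀ x y, ⟪T x, y⟫ = ⟪x, T y⟫) (r : ℝ)
    (h : ∀ μ ∈ spectrum ℝ T, |1 - μ| ≤ r) (x : EuclideanSpace ℝ (Fin n)) :
    |⟪x, x⟫ - ⟪T x, x⟫| ≤ r * ⟪x, x⟫ := by
  have hT' : (T : EuclideanSpace ℝ (Fin n) →ₗ[ℝ] EuclideanSpace ℝ (Fin n)).IsSymmetric := hT
  have hn : Module.finrank ℝ (EuclideanSpace ℝ (Fin n)) = n := finrank_euclideanSpace_fin
  set b := hT'.eigenvectorBasis hn with hb
  set μ := hT'.eigenvalues hn with hμdef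
  have hTb : ∀ i, T (b i) = μ i • b i := fun i => by
    exact_mod_cast hT'.apply_eigenvectorBasis hn i
  have hTdiag : T = diagConj b μ := by
    apply b.toBasis.ext
    intro i
    simp [diagConj_apply_basis, hTb i]
  have hμ : ∀ i, |1 - μ i| ≤ r := fun i =>
    h _ (Module.End.hasEigenvalue_iff_mem_spectrum.1 (hT'.hasEigenvalue_eigenvalues hn i))
  have hxx : ⟪x, x⟫ = ∑ i, b.repr x i * b.repr x i := by
    have h1 := inner_diagConj b (fun _ => 1) x x
    rw [diagConj_one] at h1
    simpa using h1
  rw [hTdiag, inner_diagConj, hxx]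
  calc |∑ i, b.repr x i * b.repr x i - ∑ i, μ i * (b.repr x i * b.repr x i)|
      = |∑ i, (1 - μ i) * (b.repr x i * b.repr x i)| := by
        rw [← Finset.sum_sub_distrib]
        congr 1
        exact Finset.sum_congr rfl fun i _ => by ring
    _ ≤ ∑ i, |(1 - μ i) * (b.repr x i * b.repr x i)| := Finset.abs_sum_le_sum_abs _ _
    _ = ∑ i, |1 - μ i| * (b.repr x i * b.repr x i) := by
        exact Finset.sum_congr rfl fun i _ => by
          rw [abs_mul, abs_of_nonneg (mul_self_nonneg (b.repr x i))]
    _ ≤ ∑ i, r * (b.repr x i * b.repr x i) :=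
        Finset.sum_le_sum fun i _ => mul_le_mul_of_nonneg_right (hμ i) (mul_self_nonneg _)
    _ = r * ∑ i, b.repr x i * b.repr x i := by rw [Finset.mul_sum]

end Aux

/-- Spectral-radius bound implies Loewner equivalence: if `ρ(I - D⁻¹A) ≤ δ/(1+δ)`
then `(1-δ)A ⪯ D ⪯ (1+δ)A`. -/
theorem stmt_7 {n : ℕ}
    (A D Dinv : Module.End ℝ (EuclideanSpace ℝ (Fin n)))
    (hAsym : ∀ x y, ⟪A x, y⟫ = ⟪x, A y⟫) (hApos : ∀ x, x ≠ 0 → 0 < ⟪A x, x⟫)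
    (hDsym : ∀ x y, ⟪D x, y⟫ = ⟪x, D y⟫) (hDpos : ∀ x, x ≠ 0 → 0 < ⟪D x, x⟫)
    (hDinv : Dinv * D = 1) (hDinv' : D * Dinv = 1)
    (δ : ℝ) (hδ : δ ∈ Set.Ioo (0:ℝ) 1)
    (hspec : ∀ z ∈ spectrum ℝ ((1 : Module.End ℝ (EuclideanSpace ℝ (Fin n))) - Dinv * A),
        |z| ≤ δ / (1 + δ)) :
    ∀ x, (1 - δ) * ⟪A x, x⟫ ≤ ⟪D x, x⟫ ∧ ⟪D x, x⟫ ≤ (1 + δ) * ⟪A x, x⟫ := by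
  obtain ⟨hδ0, hδ1⟩ := hδ
  have hpos : (0:ℝ) < 1 + δ := by linarith
  -- spectral decomposition of D
  have hD' : (D : EuclideanSpace ℝ (Fin n) →ₗ[ℝ] EuclideanSpace ℝ (Fin n)).IsSymmetric := hDsym
  have hn : Module.finrank ℝ (EuclideanSpace ℝ (Fin n)) = n := finrank_euclideanSpace_fin
  set b := hD'.eigenvectorBasis hn with hb
  set μ := hD'.eigenvalues hn with hμdef
  have hDb : ∀ i, D (b i) = μ i • b i := fun i => by
    exact_mod_cast hD'.apply_eigenvectorBasis hn i
  have hμpos : ∀ i, 0 < μ i := by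
    intro i
    have hne : b i ≠ 0 := b.toBasis.ne_zero i
    have h1 : ⟪D (b i), b i⟫ = μ i := by
      rw [hDb i, real_inner_smul_left]
      have : ⟪b i, b i⟫ = 1 := by
        rw [real_inner_self_eq_norm_sq, b.orthonormal.1 i]; norm_num
      rw [this, mul_one]
    rw [← h1]
    exact hDpos _ hne
  have hsq : ∀ i, Real.sqrt (μ i) ≠ 0 := fun i =>
    ne_of_gt (Real.sqrt_pos.2 (hμpos i))
  set Rt := diagConj b (fun i => Real.sqrt (μ i)) with hRt
  set Ri := diagConj b (fun i => (Real.sqrt (μ i))⁻¹) with hRi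
  have hDdiag : D = diagConj b μ := by
    apply b.toBasis.ext
    intro i
    simp [diagConj_apply_basis, hDb i]
  have hRR : Rt * Rt = D := by
    rw [hRt, diagConj_mul, hDdiag]
    congr 1
    funext i
    exact Real.mul_self_sqrt (hμpos i).le
  have hRRi : Rt * Ri = 1 := by
    rw [hRt, hRi, diagConj_mul, ← diagConj_one b]
    congr 1
    funext i
    exact mul_inv_cancel₀ (hsq i)
  have hRiR : Ri * Rt = 1 := by
    rw [hRt, hRi, diagConj_mul, ← diagConj_one b]
    congr 1
    funext i
    exact inv_mul_cancel₀ (hsq i)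
  have hDinv_eq : Dinv = Ri * Ri := by
    have h2 : D * (Ri * Ri) = 1 := by
      rw [← hRR]
      calc Rt * Rt * (Ri * Ri) = Rt * ((Rt * Ri) * Ri) := by
            rw [mul_assoc, mul_assoc]
        _ = 1 := by rw [hRRi, one_mul, hRRi]
    calc Dinv = Dinv * (D * (Ri * Ri)) := by rw [h2, mul_one]
      _ = (Dinv * D) * (Ri * Ri) := (mul_assoc _ _ _).symm
      _ = Ri * Ri := by rw [hDinv, one_mul]
  set M := Ri * A * Ri with hM
  have hMapp : ∀ v, M v = Ri (A (Ri v)) := fun v => rfl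
  have hMsym : ∀ x y, ⟪M x, y⟫ = ⟪x, M y⟫ := by
    intro u v
    rw [hMapp, hMapp, hRi, diagConj_symm, hAsym, ← diagConj_symm, ← hRi]
  have hMspec : ∀ z ∈ spectrum ℝ M, |1 - z| ≤ δ / (1 + δ) := by
    intro z hz
    obtain ⟨v, hv⟩ :=
      (Module.End.hasEigenvalue_iff_mem_spectrum.2 hz).exists_hasEigenvector
    have hv1 : M v = z • v := Module.End.mem_eigenspace_iff.1 hv.1
    have hw0 : Ri v ≠ 0 := by
      intro h0
      apply hv.2
      have : (Rt * Ri) v = Rt (Ri v) := rfl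
      rw [hRRi] at this
      simp only [Module.End.one_apply] at this
      rw [this, h0, map_zero]
    have hTw : ((1 : Module.End ℝ (EuclideanSpace ℝ (Fin n))) - Dinv * A) (Ri v)
        = (1 - z) • (Ri v) := by
      have hDA : (Dinv * A) (Ri v) = z • Ri v := by
        rw [hDinv_eq]
        show Ri (Ri (A (Ri v))) = z • Ri v
        rw [← hMapp, hv1, map_smul]
      rw [LinearMap.sub_apply, hDA, Module.End.one_apply, sub_smul, one_smul]
    have hE : Module.End.HasEigenvalue
        ((1 : Module.End ℝ (EuclideanSpace ℝ (Fin n))) - Dinv * A) (1 - z) :=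
      Module.End.hasEigenvalue_of_hasEigenvector
        ⟨Module.End.mem_eigenspace_iff.2 hTw, hw0⟩
    exact hspec (1 - z) (Module.End.hasEigenvalue_iff_mem_spectrum.1 hE)
  intro x
  have hAx : 0 ≤ ⟪A x, x⟫ := by
    rcases eq_or_ne x 0 with h | h
    · simp [h]
    · exact (hApos x h).le
  have hDx : 0 ≤ ⟪D x, x⟫ := by
    rcases eq_or_ne x 0 with h | h
    · simp [h]
    · exact (hDpos x h).le
  have key := quad_bound M hMsym (δ / (1 + δ)) hMspec (Rt x)
  have h1 : ⟪Rt x, Rt x⟫ = ⟪D x, x⟫ := by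
    rw [hRt, diagConj_symm, ← hRt]
    have : Rt (Rt x) = D x := by rw [← hRR]; rfl
    rw [this, real_inner_comm]
  have h2 : ⟪M (Rt x), Rt x⟫ = ⟪A x, x⟫ := by
    have hx' : Ri (Rt x) = x := by
      have : (Ri * Rt) x = Ri (Rt x) := rfl
      rw [hRiR] at this
      simpa using this.symm
    rw [hMapp, hx', hRi, diagConj_symm, ← hRi, hx']
  rw [h1, h2] at key
  obtain ⟨hlo, hhi⟩ := abs_le.1 key
  have hhi' : (⟪D x, x⟫ - ⟪A x, x⟫) * (1 + δ) ≤ δ * ⟪D x, x⟫ := by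
    rw [div_mul_eq_mul_div] at hhi
    exact (le_div_iff₀ hpos).1 hhi
  have hlo' : -(δ * ⟪D x, x⟫) ≤ (⟪D x, x⟫ - ⟪A x, x⟫) * (1 + δ) := by
    rw [div_mul_eq_mul_div, ← neg_div] at hlo
    exact (div_le_iff₀ hpos).1 hlo
  constructor
  · nlinarith [mul_nonneg hAx hδ0.le, mul_nonneg (mul_nonneg hAx hδ0.le) hδ0.le]
  · nlinarith
end

section
/- Let G : ℝ^{N_n} → ℝ^{N_e} and C : ℝ^{N_e} → ℝ^{N_f} be matrices with CG = 0. Let M_e, M_n be SPD and M^ν_f SPSD, M^ν_n SPD. Define B = Gᵀ M_e, L = Gᵀ M_e G (assumed invertible), and A^ν = Cᵀ M^ν_f C + Bᵀ M_n⁻¹ M^ν_n M_n⁻¹ B, assumed invertible. Then B (A^ν)⁻¹ Bᵀ = M_n (M^ν_n)⁻¹ M_n. -/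
open Matrix

/-- Lemma 5.1: `B (A^ν)⁻¹ Bᵀ = M_n (M^ν_n)⁻¹ M_n`. -/
theorem stmt_8 {nn ne nf : ℕ}
    (G : Matrix (Fin ne) (Fin nn) ℝ) (C : Matrix (Fin nf) (Fin ne) ℝ)
    (Me : Matrix (Fin ne) (Fin ne) ℝ) (Mn Mνn : Matrix (Fin nn) (Fin nn) ℝ)
    (Mνf : Matrix (Fin nf) (Fin nf) ℝ)
    (hCG : C * G = 0)
    (hMe : Me.PosDef) (hMn : Mn.PosDef) (hMνn : Mνn.PosDef) (hMνf : Mνf.PosSemidef)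
    (B : Matrix (Fin nn) (Fin ne) ℝ) (hB : B = Gᵀ * Me)
    (L : Matrix (Fin nn) (Fin nn) ℝ) (hL : L = Gᵀ * Me * G) (hLinv : IsUnit L.det)
    (Aν : Matrix (Fin ne) (Fin ne) ℝ)
    (hAν : Aν = Cᵀ * Mνf * C + Bᵀ * Mn⁻¹ * Mνn * Mn⁻¹ * B)
    (hAνinv : IsUnit Aν.det) :
    B * Aν⁻¹ * Bᵀ = Mn * Mνn⁻¹ * Mn := by
  have hMnu : IsUnit Mn.det := isUnit_iff_ne_zero.mpr hMn.det_pos.ne'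
  have hMνnu : IsUnit Mνn.det := isUnit_iff_ne_zero.mpr hMνn.det_pos.ne'
  have hBG : B * G = L := by rw [hB, hL, Matrix.mul_assoc]
  have hkey : Aν * (G * L⁻¹ * Mn * Mνn⁻¹ * Mn) = Bᵀ := by
    have hCGt : Cᵀ * Mνf * C * G = 0 := by
      rw [Matrix.mul_assoc, Matrix.mul_assoc, hCG, Matrix.mul_zero, Matrix.mul_zero]
    rw [hAν, Matrix.add_mul]
    have h1 : Cᵀ * Mνf * C * (G * L⁻¹ * Mn * Mνn⁻¹ * Mn) = 0 := by
      simp only [← Matrix.mul_assoc]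
      rw [hCGt]
      simp
    rw [h1, zero_add]
    have h2 : Bᵀ * Mn⁻¹ * Mνn * Mn⁻¹ * B * (G * L⁻¹ * Mn * Mνn⁻¹ * Mn) = Bᵀ := by
      simp only [← Matrix.mul_assoc]
      rw [show Bᵀ * Mn⁻¹ * Mνn * Mn⁻¹ * B * G = Bᵀ * Mn⁻¹ * Mνn * Mn⁻¹ * L by
        rw [Matrix.mul_assoc, hBG]]
      rw [Matrix.mul_assoc _ L, Matrix.mul_nonsing_inv _ hLinv, Matrix.mul_one,
        Matrix.mul_assoc _ Mn⁻¹, Matrix.nonsing_inv_mul _ hMnu, Matrix.mul_one,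
        Matrix.mul_assoc _ Mνn, Matrix.mul_nonsing_inv _ hMνnu, Matrix.mul_one,
        Matrix.mul_assoc, Matrix.nonsing_inv_mul _ hMnu, Matrix.mul_one]
    exact h2
  have hAinvB : Aν⁻¹ * Bᵀ = G * L⁻¹ * Mn * Mνn⁻¹ * Mn := by
    rw [← hkey, ← Matrix.mul_assoc, Matrix.nonsing_inv_mul _ hAνinv, Matrix.one_mul]
  rw [Matrix.mul_assoc, hAinvB]
  simp only [← Matrix.mul_assoc]
  rw [hBG, Matrix.mul_nonsing_inv _ hLinv, Matrix.one_mul]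
end

section
/- Let V, Q be finite-dimensional real Hilbert spaces, B : V → Q linear surjective, f : V → ℝ differentiable with 1·(1/2)‖u−v‖²_{I_V} ≤ D_f(u,v) ≤ L_f·(1/2)‖u−v‖²_{I_V} for an SPD operator I_V (i.e., μ_{f,I_V} = 1). Let (u*, p*) be a saddle point with ∇f(u*) + Bᵀp* = 0 and Bu* = b. Let S = B I_V⁻¹ Bᵀ, and let S̃, I_Q be SPD operators on Q with μ = λ_min(S̃⁻¹S) and γ = β μ where β = 1/(2 L_f). Define G^u(u,p) = −∇f(u) − Bᵀp, G^p(u,p) = Bu − b − B I_V⁻¹(∇f(u) + Bᵀp), and the Lyapunov gradient terms ∂_u E = ∇f(u) − ∇f(u*), ∂_p E = I_Q(p − p*). Then −⟨∂_u E, I_V⁻¹ G^u(u,p)⟩ − ⟨∂_p E, I_Q⁻¹ G^p(u,p)⟩ − (γ/2)‖p − p*‖²_{S̃ − I_Q} ≥ (β/2)‖∇f(u) − ∇f(u*)‖²_{I_V⁻¹} + (γ/2)‖p − p*‖²_{I_Q} for all u ∈ V, p ∈ Q. -/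
/-! Write `d = ∇f(u) - ∇f(u*)`, `w = u - u*`, `q = p - p*`, `c = Bᵀq`. The saddle-point equations
turn the claim into `⟨d + c, I_V⁻¹(d + c)⟩ - ⟨c, w⟩ - (γ/2)⟨S̃q, q⟩ ≥ (β/2)⟨d, I_V⁻¹d⟩`, and
`μ ⟨S̃q, q⟩ ≤ ⟨Sq, q⟩ = ⟨c, I_V⁻¹c⟩` since `S̃⁻¹S` is symmetric for the inner product
`⟨S̃·, ·⟩`. What is left is a quadratic inequality in `c`, which holds after completing the
square thanks to the strong monotonicity `⟨I_V w, w⟩ ≤ ⟨d, w⟩` and the cocoercivity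
`⟨d, I_V⁻¹d⟩ ≤ L_f ⟨d, w⟩` of `∇f`, both consequences of the two Bregman bounds. -/

open RealInnerProductSpace

variable {E : Type*} [NormedAddCommGroup E] [InnerProductSpace ℝ E]

section Bregman

variable [CompleteSpace E]

noncomputable def bregmanDiv (f : E → ℝ) (u v : E) : ℝ := f u - f v - ⟪gradient f v, u - v⟫

theorem bregmanDiv_add_bregmanDiv_swap (f : E → ℝ) (u v : E) :
    bregmanDiv f u v + bregmanDiv f v u = ⟪gradient f u - gradient f v, u - v⟫ := by
  rw [bregmanDiv, bregmanDiv, ← neg_sub u v, inner_neg_right, inner_sub_left]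
  ring

variable {f : E → ℝ} {A : E →ₗ[ℝ] E}

theorem inner_le_inner_gradient_sub_of_le_bregmanDiv
    (hlow : ∀ u v, 1 / 2 * ⟪A (u - v), u - v⟫ ≤ bregmanDiv f u v) (u v : E) :
    ⟪A (u - v), u - v⟫ ≤ ⟪gradient f u - gradient f v, u - v⟫ := by
  have h := add_le_add (hlow u v) (hlow v u)
  rw [bregmanDiv_add_bregmanDiv_swap, ← neg_sub u v, map_neg, inner_neg_neg] at h
  linarith

/- Descent lemma at `z = u - L⁻¹ Ainv g`, a gradient step from `u` for `f - ⟪∇f v, ·⟫`,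
whose minimum is attained at `v` by convexity. -/
theorem inv_two_mul_inner_le_bregmanDiv {Ainv : E →ₗ[ℝ] E} (hA : A ∘ₗ Ainv = LinearMap.id)
    {L : ℝ} (hL : 0 < L) (hconv : ∀ u v, 0 ≤ bregmanDiv f u v)
    (hsmooth : ∀ u v, bregmanDiv f u v ≤ L / 2 * ⟪A (u - v), u - v⟫) (u v : E) :
    (2 * L)⁻¹ * ⟪gradient f u - gradient f v, Ainv (gradient f u - gradient f v)⟫
      ≤ bregmanDiv f u v := by
  set g := gradient f u - gradient f v
  set z := u - L⁻¹ • Ainv g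
  have hAg : A (Ainv g) = g := LinearMap.congr_fun hA g
  have hlow := hconv z v
  have hup := hsmooth z u
  have hzu : z - u = -(L⁻¹ • Ainv g) := by simp [z]
  have hzv : z - v = (u - v) - L⁻¹ • Ainv g := by simp only [z]; abel
  simp only [bregmanDiv, hzu, hzv, map_neg, map_smul, hAg, inner_neg_left, inner_neg_right,
    inner_sub_right, real_inner_smul_left, real_inner_smul_right] at hlow hup ⊢
  have hg : ⟪gradient f u, Ainv g⟫ - ⟪gradient f v, Ainv g⟫ = ⟪g, Ainv g⟫ := by
    rw [← inner_sub_left]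
  field_simp at hlow hup ⊢
  linarith

theorem inner_le_mul_inner_gradient_sub {Ainv : E →ₗ[ℝ] E} (hA : A ∘ₗ Ainv = LinearMap.id)
    {L : ℝ} (hL : 0 < L) (hconv : ∀ u v, 0 ≤ bregmanDiv f u v)
    (hsmooth : ∀ u v, bregmanDiv f u v ≤ L / 2 * ⟪A (u - v), u - v⟫) (u v : E) :
    ⟪gradient f u - gradient f v, Ainv (gradient f u - gradient f v)⟫
      ≤ L * ⟪gradient f u - gradient f v, u - v⟫ := by
  have h := add_le_add (inv_two_mul_inner_le_bregmanDiv hA hL hconv hsmooth u v)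
    (inv_two_mul_inner_le_bregmanDiv hA hL hconv hsmooth v u)
  rw [bregmanDiv_add_bregmanDiv_swap, ← neg_sub (gradient f u), map_neg, inner_neg_neg,
    ← add_mul, ← two_mul, mul_inv, ← mul_assoc, mul_inv_cancel₀ two_ne_zero, one_mul] at h
  rwa [inv_mul_le_iff₀ hL] at h

end Bregman

/- Completing the square in `b`: `(4 - 2β)` times the difference of the two sides equals
`⟪M x, x⟫ + 4⟪M a, w⟫ - ⟪M w, w⟫ - (4β - β²)⟪M a, a⟫` with `x = (2 - β) b + 2a - w`. -/
theorem LinearMap.IsPositive.half_mul_inner_le_inner_add_sub {M : E →ₗ[ℝ] E}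
    (hM : M.IsPositive) {β : ℝ} (hβ₀ : 0 ≤ β) (hβ₂ : β < 2) {a b w : E}
    (hmono : ⟪M w, w⟫ ≤ ⟪M a, w⟫) (hcoco : 2 * β * ⟪M a, a⟫ ≤ ⟪M a, w⟫) :
    β / 2 * ⟪M a, a⟫ ≤ ⟪M (a + b), a + b⟫ - ⟪M b, w⟫ - β / 2 * ⟪M b, b⟫ := by
  have hsq := hM.inner_nonneg_left ((2 - β) • b + (2 : ℝ) • a - w)
  have hsymm : ∀ x y, ⟪M x, y⟫ = ⟪M y, x⟫ := fun x y => by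
    rw [hM.isSymmetric, real_inner_comm]
  simp only [map_add, map_sub, map_smul, inner_add_left, inner_add_right, inner_sub_left,
    inner_sub_right, real_inner_smul_left, real_inner_smul_right] at hsq ⊢
  rw [hsymm b a, hsymm w a, hsymm w b] at hsq
  rw [hsymm b a]
  have haa := hM.inner_nonneg_left a
  nlinarith [mul_nonneg hβ₀ haa, mul_nonneg (mul_nonneg hβ₀ hβ₀) haa]

theorem half_mul_inner_le_inner_add_sub_of_bregmanDiv_le [CompleteSpace E] {f : E → ℝ}
    {A Ainv : E →ₗ[ℝ] E} (hA : A.IsPositive) (hAinv : A ∘ₗ Ainv = LinearMap.id) {L β : ℝ}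
    (hL : 1 ≤ L) (hβ₀ : 0 ≤ β) (hβL : 2 * β * L ≤ 1)
    (hlow : ∀ u v, 1 / 2 * ⟪A (u - v), u - v⟫ ≤ bregmanDiv f u v)
    (hup : ∀ u v, bregmanDiv f u v ≤ L / 2 * ⟪A (u - v), u - v⟫) (u v c : E) :
    β / 2 * ⟪gradient f u - gradient f v, Ainv (gradient f u - gradient f v)⟫
      ≤ ⟪gradient f u - gradient f v + c, Ainv (gradient f u - gradient f v + c)⟫
        - ⟪c, u - v⟫ - β / 2 * ⟪c, Ainv c⟫ := by
  have hL₀ : 0 < L := one_pos.trans_le hL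
  have hAAinv : ∀ x, A (Ainv x) = x := LinearMap.congr_fun hAinv
  set d := gradient f u - gradient f v
  have hconv : ∀ u v, 0 ≤ bregmanDiv f u v := fun u v =>
    (mul_nonneg (by norm_num) (hA.inner_nonneg_left _)).trans (hlow u v)
  have hmono : ⟪A (u - v), u - v⟫ ≤ ⟪d, u - v⟫ :=
    inner_le_inner_gradient_sub_of_le_bregmanDiv hlow u v
  have hcoco : ⟪d, Ainv d⟫ ≤ L * ⟪d, u - v⟫ :=
    inner_le_mul_inner_gradient_sub hAinv hL₀ hconv hup u v
  have hcoco' : 2 * β * ⟪d, Ainv d⟫ ≤ ⟪d, u - v⟫ :=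
    calc 2 * β * ⟪d, Ainv d⟫ ≤ 2 * β * (L * ⟪d, u - v⟫) := by gcongr
      _ = (2 * β * L) * ⟪d, u - v⟫ := by ring
      _ ≤ ⟪d, u - v⟫ := mul_le_of_le_one_left ((hA.inner_nonneg_left _).trans hmono) hβL
  have hβ₂ : β < 2 := by nlinarith
  have hquad := hA.half_mul_inner_le_inner_add_sub (a := Ainv d) (b := Ainv c) (w := u - v)
    hβ₀ hβ₂ (by rwa [hAAinv]) (by rwa [hAAinv])
  rwa [← map_add, hAAinv, hAAinv, hAAinv] at hquad

theorem LinearMap.IsSymmetric.of_comp_eq_id {A Ainv : E →ₗ[ℝ] E} (hA : A.IsSymmetric)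
    (h : A ∘ₗ Ainv = LinearMap.id) : Ainv.IsSymmetric := fun x y => by
  have hAAinv : ∀ z, A (Ainv z) = z := LinearMap.congr_fun h
  rw [← hAAinv y, ← hA, hAAinv, hAAinv]

theorem isSymmetric_comp_comp_of_inner_map_eq {F : Type*} [NormedAddCommGroup F]
    [InnerProductSpace ℝ F] {B : E →ₗ[ℝ] F} {Bt : F →ₗ[ℝ] E}
    (hBt : ∀ v q, ⟪B v, q⟫ = ⟪v, Bt q⟫) {N : E →ₗ[ℝ] E} (hN : N.IsSymmetric) :
    (B ∘ₗ N ∘ₗ Bt).IsSymmetric := fun x y => by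
  simp only [LinearMap.comp_apply]
  rw [hBt, hN, real_inner_comm, ← hBt, real_inner_comm]

section Spectrum

theorem LinearMap.IsSymmetric.sInf_spectrum_mul_inner_self_le [FiniteDimensional ℝ E]
    {T : E →ₗ[ℝ] E} (hT : T.IsSymmetric) (x : E) :
    sInf (spectrum ℝ T) * ⟪x, x⟫ ≤ ⟪T x, x⟫ := by
  set b := hT.eigenvectorBasis rfl
  set ev := hT.eigenvalues (n := Module.finrank ℝ E) rfl
  have hle : ∀ i, sInf (spectrum ℝ T) ≤ ev i := fun i =>
    csInf_le (Module.End.finite_spectrum T).bddBelow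
      (hT.hasEigenvalue_eigenvalues rfl i).mem_spectrum
  have hTb : ∀ i, ⟪b i, T x⟫ = ev i * ⟪b i, x⟫ := fun i => by
    rw [← hT, hT.apply_eigenvectorBasis, real_inner_smul_left]
    rfl
  rw [← b.sum_inner_mul_inner x x, real_inner_comm, ← b.sum_inner_mul_inner x (T x),
    Finset.mul_sum]
  refine Finset.sum_le_sum fun i _ => ?_
  rw [hTb, real_inner_comm (b i) x]
  linarith [mul_le_mul_of_nonneg_right (hle i) (mul_self_nonneg ⟪b i, x⟫)]

/-- A copy of `E`, to be equipped with the inner product `⟪M x, y⟫` of a positive definite `M`. -/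
def Reweighted (E : Type*) : Type _ := E

instance : AddCommGroup (Reweighted E) := inferInstanceAs (AddCommGroup E)
instance : Module ℝ (Reweighted E) := inferInstanceAs (Module ℝ E)

noncomputable abbrev Reweighted.core {M : E →ₗ[ℝ] E} (hM : M.IsSymmetric)
    (hMpos : ∀ x, x ≠ 0 → 0 < ⟪M x, x⟫) : InnerProductSpace.Core ℝ (Reweighted E) where
  inner x y := ⟪M x, y⟫
  conj_inner_symm x y := (hM y x).trans (real_inner_comm _ _)
  re_inner_nonneg x := by
    rcases eq_or_ne x 0 with rfl | hx
    · exact (by simp : (0 : ℝ) ≤ ⟪M 0, 0⟫)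
    · exact (hMpos x hx).le
  add_left x y z := (congrArg (fun v : E => ⟪v, z⟫) (M.map_add x y)).trans (inner_add_left _ _ _)
  smul_left x y r :=
    (congrArg (fun v : E => ⟪v, y⟫) (M.map_smul r x)).trans (real_inner_smul_left _ _ _)
  definite x hx := by
    by_contra h
    exact (hMpos x h).ne' hx

theorem sInf_spectrum_mul_inner_le [FiniteDimensional ℝ E] {M T : E →ₗ[ℝ] E}
    (hM : M.IsSymmetric) (hMpos : ∀ x, x ≠ 0 → 0 < ⟪M x, x⟫) (hMT : (M ∘ₗ T).IsSymmetric)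
    (x : E) : sInf (spectrum ℝ T) * ⟪M x, x⟫ ≤ ⟪M (T x), x⟫ := by
  let core := Reweighted.core hM hMpos
  let _ : NormedAddCommGroup (Reweighted E) := core.toNormedAddCommGroup
  let _ : InnerProductSpace ℝ (Reweighted E) := InnerProductSpace.ofCore core.toCore
  have : FiniteDimensional ℝ (Reweighted E) := inferInstanceAs (FiniteDimensional ℝ E)
  let T' : Reweighted E →ₗ[ℝ] Reweighted E := T
  have hT' : T'.IsSymmetric := fun x y => (hMT x y).trans (hM x (T y)).symm
  exact hT'.sInf_spectrum_mul_inner_self_le x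

theorem sInf_spectrum_inv_comp_mul_inner_le {F : Type*} [NormedAddCommGroup F]
    [InnerProductSpace ℝ F] [FiniteDimensional ℝ F] {St Stinv : F →ₗ[ℝ] F}
    (hSt : St.IsSymmetric) (hStpos : ∀ x, x ≠ 0 → 0 < ⟪St x, x⟫)
    (hStinv : St ∘ₗ Stinv = LinearMap.id) {B : E →ₗ[ℝ] F} {Bt : F →ₗ[ℝ] E}
    (hBt : ∀ v q, ⟪B v, q⟫ = ⟪v, Bt q⟫) {N : E →ₗ[ℝ] E} (hN : N.IsSymmetric) (q : F) :
    sInf (spectrum ℝ (Stinv ∘ₗ B ∘ₗ N ∘ₗ Bt)) * ⟪St q, q⟫ ≤ ⟪Bt q, N (Bt q)⟫ := by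
  have hS : St ∘ₗ Stinv ∘ₗ B ∘ₗ N ∘ₗ Bt = B ∘ₗ N ∘ₗ Bt := by
    rw [← LinearMap.comp_assoc, hStinv, LinearMap.id_comp]
  have h := sInf_spectrum_mul_inner_le hSt hStpos
    (hS ▸ isSymmetric_comp_comp_of_inner_map_eq hBt hN) q
  rwa [← LinearMap.comp_apply St, hS, LinearMap.comp_apply, LinearMap.comp_apply, hBt,
    real_inner_comm (Bt q)] at h

end Spectrum

theorem stmt_10_general {n m : ℕ}
    (f : EuclideanSpace ℝ (Fin n) → ℝ)
    (B : EuclideanSpace ℝ (Fin n) →ₗ[ℝ] EuclideanSpace ℝ (Fin m))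
    (Bt : EuclideanSpace ℝ (Fin m) →ₗ[ℝ] EuclideanSpace ℝ (Fin n))
    (hBt : ∀ v q, ⟪B v, q⟫ = ⟪v, Bt q⟫)
    (IV IVinv : EuclideanSpace ℝ (Fin n) →ₗ[ℝ] EuclideanSpace ℝ (Fin n))
    (hIVsym : ∀ x y, ⟪IV x, y⟫ = ⟪x, IV y⟫) (hIVpos : ∀ x, x ≠ 0 → 0 < ⟪IV x, x⟫)
    (hIVinv' : IV ∘ₗ IVinv = LinearMap.id)
    (Lf : ℝ) (hLf : 1 ≤ Lf)
    (hlow : ∀ u v, 1/2 * ⟪IV (u - v), u - v⟫ ≤ f u - f v - ⟪gradient f v, u - v⟫)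
    (hup : ∀ u v, f u - f v - ⟪gradient f v, u - v⟫ ≤ Lf/2 * ⟪IV (u - v), u - v⟫)
    (ustar : EuclideanSpace ℝ (Fin n)) (pstar b : EuclideanSpace ℝ (Fin m))
    (hsaddle : gradient f ustar + Bt pstar = 0) (hconstraint : B ustar = b)
    (S : EuclideanSpace ℝ (Fin m) →ₗ[ℝ] EuclideanSpace ℝ (Fin m))
    (hS : S = B ∘ₗ IVinv ∘ₗ Bt)
    (St Stinv IQ IQinv : EuclideanSpace ℝ (Fin m) →ₗ[ℝ] EuclideanSpace ℝ (Fin m))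
    (hStsym : ∀ x y, ⟪St x, y⟫ = ⟪x, St y⟫) (hStpos : ∀ x, x ≠ 0 → 0 < ⟪St x, x⟫)
    (hIQsym : ∀ x y, ⟪IQ x, y⟫ = ⟪x, IQ y⟫)
    (hStinv' : St ∘ₗ Stinv = LinearMap.id) (hIQinv' : IQ ∘ₗ IQinv = LinearMap.id)
    (μ β γ : ℝ)
    (hμ : μ = sInf (spectrum ℝ (Stinv ∘ₗ S : Module.End ℝ (EuclideanSpace ℝ (Fin m)))))
    (hβ : β = 1/(2*Lf)) (hγ : γ = β * μ) :
    ∀ (u : EuclideanSpace ℝ (Fin n)) (p : EuclideanSpace ℝ (Fin m)),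
      -⟪gradient f u - gradient f ustar, IVinv (-(gradient f u) - Bt p)⟫
        - ⟪IQ (p - pstar), IQinv (B u - b - B (IVinv (gradient f u + Bt p)))⟫
        - γ/2 * ⟪St (p - pstar) - IQ (p - pstar), p - pstar⟫
      ≥ β/2 * ⟪IVinv (gradient f u - gradient f ustar),
            gradient f u - gradient f ustar⟫
        + γ/2 * ⟪IQ (p - pstar), p - pstar⟫ := by
  intro u p
  subst hS
  have hIV : IV.IsPositive := ⟨hIVsym, fun x => by
    rcases eq_or_ne x 0 with rfl | hx
    · simp
    · exact (hIVpos x hx).le⟩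
  have hβ₀ : 0 ≤ β := by rw [hβ]; positivity
  have hquad := half_mul_inner_le_inner_add_sub_of_bregmanDiv_le hIV hIVinv' hLf hβ₀
    (le_of_eq (by rw [hβ]; field_simp)) hlow hup u ustar (Bt (p - pstar))
  have hspec := sInf_spectrum_inv_comp_mul_inner_le hStsym hStpos hStinv' hBt
    (LinearMap.IsSymmetric.of_comp_eq_id hIVsym hIVinv') (p - pstar)
  rw [← hμ] at hspec
  have hgrad : gradient f u + Bt p = gradient f u - gradient f ustar + Bt (p - pstar) := by
    rw [← sub_zero (gradient f u + Bt p), ← hsaddle, map_sub]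
    abel
  set d := gradient f u - gradient f ustar
  set q := p - pstar
  have hdual : -⟪d, IVinv (-gradient f u - Bt p)⟫ = ⟪d, IVinv (d + Bt q)⟫ := by
    rw [← neg_add', hgrad, map_neg, inner_neg_right, neg_neg]
  have hprimal : ⟪IQ q, IQinv (B u - b - B (IVinv (gradient f u + Bt p)))⟫
      = ⟪Bt q, u - ustar⟫ - ⟪Bt q, IVinv (d + Bt q)⟫ := by
    rw [hIQsym, ← LinearMap.comp_apply IQ, hIQinv', LinearMap.id_apply, hgrad, ← hconstraint,
      ← map_sub, ← map_sub, real_inner_comm, hBt, real_inner_comm, inner_sub_right]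
  rw [hdual, hprimal, hγ, inner_sub_left (St q), real_inner_comm d, ge_iff_le]
  rw [inner_add_left] at hquad
  linarith [mul_le_mul_of_nonneg_left hspec hβ₀]

/-- Discrete strong Lyapunov property (Lemma 6.4 with `μ_{f,I_V} = 1`). -/
theorem stmt_10 {n m : ℕ}
    (f : EuclideanSpace ℝ (Fin n) → ℝ) (hf : Differentiable ℝ f)
    (B : EuclideanSpace ℝ (Fin n) →ₗ[ℝ] EuclideanSpace ℝ (Fin m))
    (hBsurj : Function.Surjective B)
    (Bt : EuclideanSpace ℝ (Fin m) →ₗ[ℝ] EuclideanSpace ℝ (Fin n))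
    (hBt : ∀ v q, ⟪B v, q⟫ = ⟪v, Bt q⟫)
    (IV IVinv : EuclideanSpace ℝ (Fin n) →ₗ[ℝ] EuclideanSpace ℝ (Fin n))
    (hIVsym : ∀ x y, ⟪IV x, y⟫ = ⟪x, IV y⟫) (hIVpos : ∀ x, x ≠ 0 → 0 < ⟪IV x, x⟫)
    (hIVinv : IVinv ∘ₗ IV = LinearMap.id) (hIVinv' : IV ∘ₗ IVinv = LinearMap.id)
    (Lf : ℝ) (hLf : 1 ≤ Lf)
    (hlow : ∀ u v, 1/2 * ⟪IV (u - v), u - v⟫ ≤ f u - f v - ⟪gradient f v, u - v⟫)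
    (hup : ∀ u v, f u - f v - ⟪gradient f v, u - v⟫ ≤ Lf/2 * ⟪IV (u - v), u - v⟫)
    (ustar : EuclideanSpace ℝ (Fin n)) (pstar b : EuclideanSpace ℝ (Fin m))
    (hsaddle : gradient f ustar + Bt pstar = 0) (hconstraint : B ustar = b)
    (S : EuclideanSpace ℝ (Fin m) →ₗ[ℝ] EuclideanSpace ℝ (Fin m))
    (hS : S = B ∘ₗ IVinv ∘ₗ Bt)
    (St Stinv IQ IQinv : EuclideanSpace ℝ (Fin m) →ₗ[ℝ] EuclideanSpace ℝ (Fin m))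
    (hStsym : ∀ x y, ⟪St x, y⟫ = ⟪x, St y⟫) (hStpos : ∀ x, x ≠ 0 → 0 < ⟪St x, x⟫)
    (hIQsym : ∀ x y, ⟪IQ x, y⟫ = ⟪x, IQ y⟫) (hIQpos : ∀ x, x ≠ 0 → 0 < ⟪IQ x, x⟫)
    (hStinv : Stinv ∘ₗ St = LinearMap.id) (hStinv' : St ∘ₗ Stinv = LinearMap.id)
    (hIQinv : IQinv ∘ₗ IQ = LinearMap.id) (hIQinv' : IQ ∘ₗ IQinv = LinearMap.id)
    (μ β γ : ℝ)
    (hμ : μ = sInf (spectrum ℝ (Stinv ∘ₗ S : Module.End ℝ (EuclideanSpace ℝ (Fin m)))))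
    (hβ : β = 1/(2*Lf)) (hγ : γ = β * μ) :
    ∀ (u : EuclideanSpace ℝ (Fin n)) (p : EuclideanSpace ℝ (Fin m)),
      -⟪gradient f u - gradient f ustar, IVinv (-(gradient f u) - Bt p)⟫
        - ⟪IQ (p - pstar), IQinv (B u - b - B (IVinv (gradient f u + Bt p)))⟫
        - γ/2 * ⟪St (p - pstar) - IQ (p - pstar), p - pstar⟫
      ≥ β/2 * ⟪IVinv (gradient f u - gradient f ustar),
            gradient f u - gradient f ustar⟫
        + γ/2 * ⟪IQ (p - pstar), p - pstar⟫ :=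
  stmt_10_general f B Bt hBt IV IVinv hIVsym hIVpos hIVinv' Lf hLf hlow hup ustar pstar b hsaddle
    hconstraint S hS St Stinv IQ IQinv hStsym hStpos hIQsym hStinv' hIQinv' μ β γ hμ hβ hγ
end
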